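/- arXiv:2108.03285 — 2 statements merged into one kernel-verified Lean document; each statement's English description precedes it below -/
import Mathlib

section
/- Let f : ℝⁿ → ℝ be L-smooth, satisfy the PL inequality with constant μ > 0, and let v = ∇f(x) + e for an error vector e. Then the inexact gradient step x⁺ = x − (1/L)v satisfies f(x⁺) − f* ≤ (1 − μ/L)(f(x) − f*) + (1/(2L))‖e‖². -/
open Real intervalIntegral

lemma descent_lemma
    {n : ℕ} (f : EuclideanSpace ℝ (Fin n) → ℝ) (L : ℝ) (hL : 0 < L)
    (hdiff : ∀ x, DifferentiableAt ℝ f x)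
    (hlip : ∀ x y, ‖gradient f x - gradient f y‖ ≤ L * ‖x - y‖)
    (x y : EuclideanSpace ℝ (Fin n)) :
    f y ≤ f x + inner ℝ (gradient f x) (y - x) + L / 2 * ‖y - x‖ ^ 2 := by
  set v := y - x with hv
  have hgcont : Continuous (gradient f) := by
    apply (LipschitzWith.of_dist_le_mul (K := L.toNNReal) ?_).continuous
    intro a b
    simpa [dist_eq_norm, Real.coe_toNNReal L hL.le] using hlip a b
  have hg : ∀ t : ℝ, HasDerivAt (fun t : ℝ => f (x + t • v))
      (inner ℝ (gradient f (x + t • v)) v) t := by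
    intro t
    have h1 : HasDerivAt (fun t : ℝ => x + t • v) v t := by
      simpa using ((hasDerivAt_id t).smul_const v).const_add x
    have h2 := ((hdiff (x + t • v)).hasGradientAt).hasFDerivAt
    have := h2.comp_hasDerivAt t h1
    exact this
  have hcont : Continuous fun t : ℝ => (inner ℝ (gradient f (x + t • v)) v : ℝ) := by
    exact (hgcont.comp (by continuity)).inner continuous_const
  have hftc : f y - f x = ∫ t in (0:ℝ)..1, (inner ℝ (gradient f (x + t • v)) v : ℝ) := by
    have := intervalIntegral.integral_eq_sub_of_hasDerivAt (a := (0:ℝ)) (b := 1)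
      (fun t _ => hg t) (hcont.intervalIntegrable 0 1)
    simpa [hv] using this.symm
  have hbound : ∀ t ∈ Set.Icc (0:ℝ) 1,
      (inner ℝ (gradient f (x + t • v)) v : ℝ) ≤ inner ℝ (gradient f x) v + L * ‖v‖ ^ 2 * t := by
    intro t ht
    have h1 : (inner ℝ (gradient f (x + t • v)) v : ℝ) - inner ℝ (gradient f x) v
        = inner ℝ (gradient f (x + t • v) - gradient f x) v := by
      rw [inner_sub_left]
    have h2 : (inner ℝ (gradient f (x + t • v) - gradient f x) v : ℝ)
        ≤ ‖gradient f (x + t • v) - gradient f x‖ * ‖v‖ := real_inner_le_norm _ _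
    have h3 : ‖gradient f (x + t • v) - gradient f x‖ ≤ L * (t * ‖v‖) := by
      have := hlip (x + t • v) x
      simpa [norm_smul, abs_of_nonneg ht.1] using this
    nlinarith [norm_nonneg v, mul_le_mul_of_nonneg_right h3 (norm_nonneg v)]
  have hI : (∫ t in (0:ℝ)..1, (inner ℝ (gradient f (x + t • v)) v : ℝ))
      ≤ ∫ t in (0:ℝ)..1, (inner ℝ (gradient f x) v + L * ‖v‖ ^ 2 * t : ℝ) := by
    apply intervalIntegral.integral_mono_on (by norm_num)
      (hcont.intervalIntegrable 0 1)
      (intervalIntegrable_const.add ((continuous_const.mul continuous_id).intervalIntegrable 0 1 :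
        IntervalIntegrable (fun t : ℝ => L * ‖v‖ ^ 2 * t) MeasureTheory.volume 0 1))
    exact hbound
  have hI2 : (∫ t in (0:ℝ)..1, (inner ℝ (gradient f x) v + L * ‖v‖ ^ 2 * t : ℝ))
      = inner ℝ (gradient f x) v + L / 2 * ‖v‖ ^ 2 := by
    have hii : IntervalIntegrable (fun t : ℝ => L * ‖v‖ ^ 2 * t) MeasureTheory.volume 0 1 :=
      (continuous_const.mul continuous_id).intervalIntegrable 0 1
    rw [intervalIntegral.integral_add (intervalIntegrable_const) hii,
      intervalIntegral.integral_const_mul, integral_id, intervalIntegral.integral_const]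
    simp; ring
  linarith [hftc ▸ (hI.trans_eq hI2)]

/-- Inexact gradient step for an `L`-smooth function satisfying the PL inequality:
linear decrease up to an error `(1/(2L))‖e‖²`. -/
theorem inexact_gradient_step_PL
    {n : ℕ} (f : EuclideanSpace ℝ (Fin n) → ℝ) (L μ fstar : ℝ)
    (hL : 0 < L) (hμ : 0 < μ) (hμL : μ ≤ L)
    (hdiff : ∀ x, DifferentiableAt ℝ f x)
    (hlip : ∀ x y, ‖gradient f x - gradient f y‖ ≤ L * ‖x - y‖)
    (hglb : IsGLB (Set.range f) fstar)
    (hPL : ∀ x, 2 * μ * (f x - fstar) ≤ ‖gradient f x‖ ^ 2)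
    (x e : EuclideanSpace ℝ (Fin n)) :
    f (x - (1 / L) • (gradient f x + e)) - fstar ≤
      (1 - μ / L) * (f x - fstar) + (1 / (2 * L)) * ‖e‖ ^ 2 := by
  set g := gradient f x with hgdef
  set xp := x - (1 / L) • (g + e) with hxp
  have hd := descent_lemma f L hL hdiff hlip x xp
  have hsub : xp - x = -((1 / L) • (g + e)) := by rw [hxp]; abel
  have h1 : (inner ℝ g (xp - x) : ℝ) = -(1 / L) * (‖g‖ ^ 2 + inner ℝ g e) := by
    rw [hsub, inner_neg_right, real_inner_smul_right, inner_add_right,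
      real_inner_self_eq_norm_sq]
    ring
  have h2 : ‖xp - x‖ ^ 2 = (1 / L) ^ 2 * (‖g‖ ^ 2 + 2 * inner ℝ g e + ‖e‖ ^ 2) := by
    rw [hsub, norm_neg, norm_smul, mul_pow, norm_add_sq_real g e]
    simp [abs_of_pos (by positivity : (0:ℝ) < 1 / L)]
  have key : f xp ≤ f x - 1 / (2 * L) * ‖g‖ ^ 2 + 1 / (2 * L) * ‖e‖ ^ 2 := by
    rw [h1, h2] at hd
    have hL' : L ≠ 0 := hL.ne'
    have halg : f x + -(1 / L) * (‖g‖ ^ 2 + inner ℝ g e) +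
        L / 2 * ((1 / L) ^ 2 * (‖g‖ ^ 2 + 2 * inner ℝ g e + ‖e‖ ^ 2)) =
        f x - 1 / (2 * L) * ‖g‖ ^ 2 + 1 / (2 * L) * ‖e‖ ^ 2 := by
      field_simp; ring
    linarith
  have hpl := hPL x
  have hmul : 1 / (2 * L) * (2 * μ * (f x - fstar)) ≤ 1 / (2 * L) * ‖g‖ ^ 2 :=
    mul_le_mul_of_nonneg_left hpl (by positivity)
  have heq : 1 / (2 * L) * (2 * μ * (f x - fstar)) = μ / L * (f x - fstar) := by
    field_simp
  have heq2 : (1 - μ / L) * (f x - fstar) = (f x - fstar) - μ / L * (f x - fstar) := by ring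
  linarith [heq ▸ hmul]
end

section
/- Let f_t, f_{t+1} be L-smooth functions on ℝⁿ satisfying the PL inequality with constant μ, with finite minima f_t*, f_{t+1}*. Let x_{t+1} = x_t − (1/L)(∇f_t(x_t) + e_t). Then the instantaneous regret r_{t+1} := f_{t+1}(x_{t+1}) − f_{t+1}* satisfies r_{t+1} ≤ (1 − μ/L) r_t + (1/(2L))‖e_t‖² + |f_{t+1}(x_{t+1}) − f_t(x_{t+1})| + |f_{t+1}* − f_t*|, where r_t := f_t(x_t) − f_t*. -/
open Real

local notation "⟪" x ", " y "⟫" => @inner ℝ _ _ x y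

/-- Descent lemma: for a differentiable function with `L`-Lipschitz gradient,
`f y ≤ f x + ⟪∇f x, y - x⟫ + (L/2)‖y - x‖²`. -/
lemma descent_lemma_aux {n : ℕ} (f : EuclideanSpace ℝ (Fin n) → ℝ) (L : ℝ) (hL : 0 ≤ L)
    (hdiff : ∀ x, DifferentiableAt ℝ f x)
    (hlip : ∀ x y, ‖gradient f x - gradient f y‖ ≤ L * ‖x - y‖)
    (x y : EuclideanSpace ℝ (Fin n)) :
    f y ≤ f x + ⟪gradient f x, y - x⟫ + L / 2 * ‖y - x‖ ^ 2 := by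
  set v := y - x with hv
  have hgradcont : Continuous (gradient f) := by
    have : LipschitzWith (Real.toNNReal L) (gradient f) := by
      apply LipschitzWith.of_dist_le_mul
      intro a b
      rw [dist_eq_norm, dist_eq_norm]
      calc ‖gradient f a - gradient f b‖ ≤ L * ‖a - b‖ := hlip a b
        _ ≤ Real.toNNReal L * ‖a - b‖ := by
            gcongr
            exact Real.le_coe_toNNReal L
    exact this.continuous
  set c : ℝ → EuclideanSpace ℝ (Fin n) := fun t => x + t • v with hc
  have hccont : Continuous c := by
    apply continuous_const.add
    exact continuous_id.smul continuous_const
  have hcderiv : ∀ t : ℝ, HasDerivAt c v t := by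
    intro t
    have h1 : HasDerivAt (fun t : ℝ => t • v) v t := by
      simpa using (hasDerivAt_id t).smul_const v
    simpa [hc] using h1.const_add x
  set φ : ℝ → ℝ := fun t => ⟪gradient f (c t), v⟫ with hφ
  have hφcont : Continuous φ := (hgradcont.comp hccont).inner continuous_const
  have hhderiv : ∀ t : ℝ, HasDerivAt (fun s => f (c s)) (φ t) t := by
    intro t
    have hg := (hdiff (c t)).hasGradientAt.hasFDerivAt
    have h2 := hg.comp_hasDerivAt t (hcderiv t)
    simpa [hφ, InnerProductSpace.toDual_apply_apply, Function.comp_def] using h2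
  have hFTC : ∫ t in (0:ℝ)..1, φ t = f (c 1) - f (c 0) :=
    intervalIntegral.integral_eq_sub_of_hasDerivAt (fun t _ => hhderiv t)
      (hφcont.intervalIntegrable 0 1)
  have hc0 : c 0 = x := by simp [hc]
  have hc1 : c 1 = y := by simp [hc, hv]
  have hbound : ∀ t ∈ Set.Icc (0:ℝ) 1, φ t ≤ ⟪gradient f x, v⟫ + (L * ‖v‖ ^ 2) * t := by
    intro t ht
    have h1 : φ t - ⟪gradient f x, v⟫ = ⟪gradient f (c t) - gradient f x, v⟫ := by
      rw [inner_sub_left]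
    have h2 : ⟪gradient f (c t) - gradient f x, v⟫ ≤ ‖gradient f (c t) - gradient f x‖ * ‖v‖ :=
      real_inner_le_norm _ _
    have h3 : ‖gradient f (c t) - gradient f x‖ ≤ L * (t * ‖v‖) := by
      have h4 := hlip (c t) x
      have h5 : c t - x = t • v := by simp [hc]
      rw [h5, norm_smul, Real.norm_eq_abs, abs_of_nonneg ht.1] at h4
      exact h4
    nlinarith [norm_nonneg v, ht.1]
  have hcontb : Continuous fun t : ℝ => ⟪gradient f x, v⟫ + (L * ‖v‖ ^ 2) * t := by
    continuity
  have hint : ∫ t in (0:ℝ)..1, φ t ≤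
      ∫ t in (0:ℝ)..1, (⟪gradient f x, v⟫ + (L * ‖v‖ ^ 2) * t) := by
    apply intervalIntegral.integral_mono_on (by norm_num)
      (hφcont.intervalIntegrable 0 1) (hcontb.intervalIntegrable 0 1) hbound
  have hval : ∫ t in (0:ℝ)..1, (⟪gradient f x, v⟫ + (L * ‖v‖ ^ 2) * t) =
      ⟪gradient f x, v⟫ + L / 2 * ‖v‖ ^ 2 := by
    rw [intervalIntegral.integral_add intervalIntegrable_const
      ((by fun_prop : Continuous fun t : ℝ => (L * ‖v‖ ^ 2) * t).intervalIntegrable 0 1),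
      intervalIntegral.integral_const_mul]
    simp [integral_id]
    ring
  rw [hFTC, hc0, hc1] at hint
  rw [hval] at hint
  linarith

/-- One-step regret recursion for the inexact online gradient descent under the
PL inequality: `r_{t+1} ≤ (1-μ/L) r_t + (1/(2L))‖e_t‖² + ψ_{t+1}`. -/
theorem online_gradient_regret_recursion
    {n : ℕ} (ft ft1 : EuclideanSpace ℝ (Fin n) → ℝ) (L μ ftstar ft1star : ℝ)
    (hL : 0 < L) (hμ : 0 < μ) (hμL : μ ≤ L)
    (hdiff_t : ∀ x, DifferentiableAt ℝ ft x)
    (hdiff_t1 : ∀ x, DifferentiableAt ℝ ft1 x)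
    (hlip_t : ∀ x y, ‖gradient ft x - gradient ft y‖ ≤ L * ‖x - y‖)
    (hlip_t1 : ∀ x y, ‖gradient ft1 x - gradient ft1 y‖ ≤ L * ‖x - y‖)
    (hglb_t : IsGLB (Set.range ft) ftstar)
    (hglb_t1 : IsGLB (Set.range ft1) ft1star)
    (hPL_t : ∀ x, 2 * μ * (ft x - ftstar) ≤ ‖gradient ft x‖ ^ 2)
    (hPL_t1 : ∀ x, 2 * μ * (ft1 x - ft1star) ≤ ‖gradient ft1 x‖ ^ 2)
    (xt e : EuclideanSpace ℝ (Fin n))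
    (xt1 : EuclideanSpace ℝ (Fin n))
    (hstep : xt1 = xt - (1 / L) • (gradient ft xt + e)) :
    ft1 xt1 - ft1star ≤
      (1 - μ / L) * (ft xt - ftstar) + (1 / (2 * L)) * ‖e‖ ^ 2 +
        |ft1 xt1 - ft xt1| + |ft1star - ftstar| := by
  have hL0 : (L : ℝ) ≠ 0 := hL.ne'
  set g := gradient ft xt with hg
  have hd := descent_lemma_aux ft L hL.le hdiff_t hlip_t xt xt1
  have hvx : xt1 - xt = -(1 / L) • (g + e) := by
    rw [hstep]; rw [neg_smul]; abel
  have hip : ⟪g, xt1 - xt⟫ = -(1 / L) * ⟪g, g + e⟫ := by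
    rw [hvx, real_inner_smul_right]
  have hns : ‖xt1 - xt‖ ^ 2 = (1 / L) ^ 2 * ‖g + e‖ ^ 2 := by
    rw [hvx, norm_smul, Real.norm_eq_abs, abs_neg, abs_of_nonneg (by positivity : (0:ℝ) ≤ 1 / L)]
    ring
  have hexp : ‖g + e‖ ^ 2 = ‖g‖ ^ 2 + 2 * ⟪g, e⟫ + ‖e‖ ^ 2 := norm_add_sq_real g e
  have hipexp : ⟪g, g + e⟫ = ‖g‖ ^ 2 + ⟪g, e⟫ := by
    rw [inner_add_right, real_inner_self_eq_norm_sq]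
  rw [hip, hns, hexp, hipexp] at hd
  have h1 : ft xt1 ≤ ft xt - (1 / (2 * L)) * ‖g‖ ^ 2 + (1 / (2 * L)) * ‖e‖ ^ 2 := by
    have heq : ft xt + -(1 / L) * (‖g‖ ^ 2 + ⟪g, e⟫) +
        L / 2 * ((1 / L) ^ 2 * (‖g‖ ^ 2 + 2 * ⟪g, e⟫ + ‖e‖ ^ 2)) =
        ft xt - (1 / (2 * L)) * ‖g‖ ^ 2 + (1 / (2 * L)) * ‖e‖ ^ 2 := by
      field_simp
      ring
    linarith [heq ▸ hd]
  have h2 : (μ / L) * (ft xt - ftstar) ≤ (1 / (2 * L)) * ‖g‖ ^ 2 := by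
    have hPL := hPL_t xt
    have h3 : (1 / (2 * L)) * (2 * μ * (ft xt - ftstar)) ≤ (1 / (2 * L)) * ‖g‖ ^ 2 := by
      apply mul_le_mul_of_nonneg_left hPL (by positivity)
    calc (μ / L) * (ft xt - ftstar) = (1 / (2 * L)) * (2 * μ * (ft xt - ftstar)) := by
          field_simp
      _ ≤ (1 / (2 * L)) * ‖g‖ ^ 2 := h3
  have key : ft xt1 - ftstar ≤ (1 - μ / L) * (ft xt - ftstar) + (1 / (2 * L)) * ‖e‖ ^ 2 := by
    have : (1 - μ / L) * (ft xt - ftstar) =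
        (ft xt - ftstar) - (μ / L) * (ft xt - ftstar) := by ring
    linarith [this]
  linarith [le_abs_self (ft1 xt1 - ft xt1), neg_abs_le (ft1star - ftstar)]
end
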